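/- arXiv:1611.03553 — 2 statements merged into one kernel-verified Lean document; each statement's English description precedes it below -/
import Mathlib

section
/- Let S be a decomposable sum-product expression over the semiring ℝ≥0 whose scope is all of ι, let E ⊆ ι be a set of evidence variables and e an assignment to E. Define Z_e(S) ∈ ℝ≥0 recursively: Z_e of a constant leaf c is c; Z_e of a leaf (i, φ) is φ (e i) if i ∈ E and ∑_{t ∈ X i} φ t otherwise; Z_e of a Product node is the product of the Z_e-values of its children; Z_e of a Sum node v with children G₁, …, G_m is ∑_k (∏_{i ∈ (scope(v) \ scope(G_k)) \ E} |X i|) • Z_e(G_k). Then ∑_{z : ∀ i ∈ ι \ E, X i} eval S (e combined with z) = Z_e(S), where (e combined with z) is the full assignment agreeing with e on E and with z on ι \ E. -/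
/-!
`Z_e(G)` is the sum of `G` over all completions of the evidence on the free variables
`scope(G) \ E`. At a Product node, decomposability makes the children depend on pairwise
disjoint sets of free variables, so the sum of the product factors into the product of the
sums. At a Sum node, the child `G_k` does not depend on the free variables in
`(scope(v) \ scope(G_k)) \ E`, and summing them out contributes the factor `∏ |X i|`.
When `scope(S) = ι` the free variables are exactly `ι \ E`.
-/

open Finset

/-- A sum-product expression (SPF) over a commutative semiring `R` in variables
indexed by `ι` with domains `X i`. -/
inductive SPF (R : Type) (ι : Type) (X : ι → Type) where
  | const : R → SPF R ι X
  | leaf : (i : ι) → (X i → R) → SPF R ι X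
  | sum : List (SPF R ι X) → SPF R ι X
  | prod : List (SPF R ι X) → SPF R ι X

namespace SPF

variable {R : Type} [CommSemiring R] {ι : Type} [DecidableEq ι] {X : ι → Type}

/-- Evaluation of an SPF at a full assignment. -/
def eval : SPF R ι X → ((i : ι) → X i) → R
  | .const c, _ => c
  | .leaf i φ, x => φ (x i)
  | .sum l, x => (l.attach.map fun c => c.1.eval x).sum
  | .prod l, x => (l.attach.map fun c => c.1.eval x).prod
decreasing_by all_goals (simp_wf; have := List.sizeOf_lt_of_mem c.2; omega)

/-- The scope of an SPF: the set of variable indices appearing in its leaves. -/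
def scope : SPF R ι X → Finset ι
  | .const _ => ∅
  | .leaf i _ => {i}
  | .sum l => (l.attach.map fun c => c.1.scope).foldr (· ∪ ·) ∅
  | .prod l => (l.attach.map fun c => c.1.scope).foldr (· ∪ ·) ∅
decreasing_by all_goals (simp_wf; have := List.sizeOf_lt_of_mem c.2; omega)

/-- An SPF is decomposable iff the children of every Product node have
pairwise disjoint scopes. -/
inductive Decomposable : SPF R ι X → Prop
  | const (c : R) : Decomposable (.const c)
  | leaf (i : ι) (φ : X i → R) : Decomposable (.leaf i φ)
  | sum {l : List (SPF R ι X)} :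
      (∀ G ∈ l, Decomposable G) → Decomposable (.sum l)
  | prod {l : List (SPF R ι X)} :
      (∀ G ∈ l, Decomposable G) →
      l.Pairwise (fun G H => Disjoint G.scope H.scope) →
      Decomposable (.prod l)

/-- The bottom-up pass `Z_e` for computing the (unnormalized) probability of
evidence `e` on the evidence variables `E` in an SPN: leaves on evidence
variables are fixed to their evidence values, all other leaves are summed out,
Product nodes multiply, and Sum nodes add their children's values scaled by the
cardinality of the domains of the missing non-evidence variables. -/
def Ze [∀ i, Fintype (X i)] (E : Finset ι) (e : (i : ↥E) → X i.1) :
    SPF R ι X → R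
  | .const c => c
  | .leaf i φ => if h : i ∈ E then φ (e ⟨i, h⟩) else ∑ t, φ t
  | .prod l => (l.attach.map fun c => c.1.Ze E e).prod
  | .sum l => (l.attach.map fun c =>
      (∏ i ∈ ((SPF.sum l).scope \ c.1.scope) \ E, Fintype.card (X i)) •
        c.1.Ze E e).sum
decreasing_by all_goals (simp_wf; have := List.sizeOf_lt_of_mem c.2; omega)

end SPF

/-- The full assignment agreeing with the evidence `e` on `E` and with `z` on
the complement of `E`. -/
def combineEvidence {ι : Type} [Fintype ι] [DecidableEq ι] {X : ι → Type}
    (E : Finset ι) (e : (i : ↥E) → X i.1) (z : (i : ↥(Eᶜ)) → X i.1) :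
    (i : ι) → X i := fun i =>
  if h : i ∈ E then e ⟨i, h⟩ else z ⟨i, Finset.mem_compl.mpr h⟩

open Function

theorem List.sum_map_sum {α β M : Type*} [AddCommMonoid M] (l : List β) (s : Finset α)
    (f : β → α → M) :
    (l.map fun b => ∑ a ∈ s, f b a).sum = ∑ a ∈ s, (l.map (f · a)).sum := by
  simpa using Multiset.sum_map_sum (m := (l : Multiset β)) (s := s) (f := f)

section UpdateFinset

variable {ι : Type*} [DecidableEq ι] {X : ι → Type*}

theorem DependsOn.apply_updateFinset {α : Type*} {f : (∀ i, X i) → α} {s B : Finset ι}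
    (hf : DependsOn f s) (hsB : Disjoint s B) (x : ∀ i, X i) (b : ∀ i : ↥B, X i) :
    f (Function.updateFinset x B b) = f x :=
  hf fun i hi => by simp [Function.updateFinset, disjoint_left.mp hsB hi]

variable [∀ i, Fintype (X i)]

theorem sum_updateFinset_union {M : Type*} [AddCommMonoid M] {A B : Finset ι}
    (hAB : Disjoint A B) (x : ∀ i, X i) (F : (∀ i, X i) → M) :
    ∑ z : (∀ i : ↥(A ∪ B), X i), F (updateFinset x (A ∪ B) z) =
      ∑ a : (∀ i : ↥A, X i), ∑ b : (∀ i : ↥B, X i), F (updateFinset (updateFinset x A a) B b) := by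
  simp_rw [updateFinset_updateFinset hAB]
  rw [← Fintype.sum_prod_type']
  exact (Fintype.sum_equiv (Equiv.piFinsetUnion X hAB) _ _ fun _ => rfl).symm

theorem sum_updateFinset_union_of_dependsOn {M : Type*} [AddCommMonoid M] {A B s : Finset ι}
    (hAB : Disjoint A B) (x : ∀ i, X i) {f : (∀ i, X i) → M} (hf : DependsOn f s)
    (hsB : Disjoint s B) :
    ∑ z : (∀ i : ↥(A ∪ B), X i), f (updateFinset x (A ∪ B) z) =
      (∏ i ∈ B, Fintype.card (X i)) • ∑ a : (∀ i : ↥A, X i), f (updateFinset x A a) := by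
  simp_rw [sum_updateFinset_union hAB, hf.apply_updateFinset hsB, sum_const, card_univ,
    Fintype.card_pi, prod_coe_sort B fun i => Fintype.card (X i), smul_sum]

theorem sum_mul_updateFinset_union {R : Type*} [CommSemiring R] {A B s t : Finset ι}
    (hAB : Disjoint A B) (x : ∀ i, X i) {f g : (∀ i, X i) → R} (hf : DependsOn f s)
    (hg : DependsOn g t) (hsB : Disjoint s B) (htA : Disjoint t A) :
    ∑ z : (∀ i : ↥(A ∪ B), X i), f (updateFinset x (A ∪ B) z) * g (updateFinset x (A ∪ B) z) =
      (∑ a : (∀ i : ↥A, X i), f (updateFinset x A a)) *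
        ∑ b : (∀ i : ↥B, X i), g (updateFinset x B b) := by
  rw [sum_updateFinset_union hAB x fun y => f y * g y, sum_mul_sum]
  refine sum_congr rfl fun a _ => sum_congr rfl fun b _ => ?_
  rw [hf.apply_updateFinset hsB]
  congr 1
  exact hg fun i hi => by simp [updateFinset, disjoint_left.mp htA hi]

end UpdateFinset

namespace SPF

variable {R : Type} {ι : Type} {X : ι → Type}

@[simp]
theorem eval_sum [CommSemiring R] (l : List (SPF R ι X)) (x : ∀ i, X i) :
    (SPF.sum l).eval x = (l.map (·.eval x)).sum := by
  rw [eval]; congr 1; simp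

@[simp]
theorem eval_prod [CommSemiring R] (l : List (SPF R ι X)) (x : ∀ i, X i) :
    (SPF.prod l).eval x = (l.map (·.eval x)).prod := by
  rw [eval]; congr 1; simp

theorem eval_prod_cons [CommSemiring R] (G : SPF R ι X) (r : List (SPF R ι X)) (x : ∀ i, X i) :
    (SPF.prod (G :: r)).eval x = G.eval x * (SPF.prod r).eval x := by
  simp

theorem mem_scope_sum [DecidableEq ι] {l : List (SPF R ι X)} {j : ι} :
    j ∈ (SPF.sum l).scope ↔ ∃ G ∈ l, j ∈ G.scope := by
  rw [scope, List.map_attach_eq_pmap, List.pmap_eq_map]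
  induction l with
  | nil => simp
  | cons G r ih => simp [ih]

theorem mem_scope_prod [DecidableEq ι] {l : List (SPF R ι X)} {j : ι} :
    j ∈ (SPF.prod l).scope ↔ ∃ G ∈ l, j ∈ G.scope := by
  rw [scope, List.map_attach_eq_pmap, List.pmap_eq_map]
  induction l with
  | nil => simp
  | cons G r ih => simp [ih]

@[simp]
theorem scope_const [DecidableEq ι] (c : R) : (SPF.const c : SPF R ι X).scope = ∅ := by
  rw [scope]

@[simp]
theorem scope_leaf [DecidableEq ι] (i : ι) (φ : X i → R) : (SPF.leaf i φ).scope = {i} := by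
  rw [scope]

@[simp]
theorem scope_prod_nil [DecidableEq ι] : (SPF.prod [] : SPF R ι X).scope = ∅ := by
  ext j
  simp [mem_scope_prod]

theorem scope_prod_cons [DecidableEq ι] (G : SPF R ι X) (r : List (SPF R ι X)) :
    (SPF.prod (G :: r)).scope = G.scope ∪ (SPF.prod r).scope := by
  ext j
  simp [mem_scope_prod]

theorem dependsOn_eval [CommSemiring R] [DecidableEq ι] :
    ∀ G : SPF R ι X, DependsOn G.eval G.scope
  | .const c, x, y, _ => by simp only [eval]
  | .leaf i φ, x, y, h => by simp [eval, h i (by simp)]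
  | .sum l, x, y, h => by
      simp only [eval_sum]
      exact congrArg List.sum <| List.map_congr_left fun G hG =>
        dependsOn_eval G fun i hi => h i (mem_scope_sum.mpr ⟨G, hG, hi⟩)
  | .prod l, x, y, h => by
      simp only [eval_prod]
      exact congrArg List.prod <| List.map_congr_left fun G hG =>
        dependsOn_eval G fun i hi => h i (mem_scope_prod.mpr ⟨G, hG, hi⟩)
termination_by G => sizeOf G
decreasing_by all_goals (have := List.sizeOf_lt_of_mem hG; simp; omega)

theorem Decomposable.of_prod_cons [DecidableEq ι] {G : SPF R ι X} {r : List (SPF R ι X)}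
    (h : (SPF.prod (G :: r)).Decomposable) :
    G.Decomposable ∧ (SPF.prod r).Decomposable ∧ Disjoint G.scope (SPF.prod r).scope := by
  obtain _ | _ | _ | ⟨hdec, hpair⟩ := h
  rw [List.pairwise_cons] at hpair
  refine ⟨hdec G List.mem_cons_self,
    .prod (fun H hH => hdec H (List.mem_cons_of_mem G hH)) hpair.2, ?_⟩
  rw [disjoint_right]
  intro j hj
  obtain ⟨H, hH, hjH⟩ := mem_scope_prod.mp hj
  exact disjoint_right.mp (hpair.1 H hH) hjH

variable [CommSemiring R] [DecidableEq ι] [∀ i, Fintype (X i)] (E : Finset ι)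
  (e : (i : ↥E) → X i.1)

theorem Ze_sum (l : List (SPF R ι X)) :
    (SPF.sum l).Ze E e = (l.map fun G =>
      (∏ i ∈ ((SPF.sum l).scope \ G.scope) \ E, Fintype.card (X i)) • G.Ze E e).sum := by
  rw [Ze]; congr 1; simp

theorem Ze_prod_cons (G : SPF R ι X) (r : List (SPF R ι X)) :
    (SPF.prod (G :: r)).Ze E e = G.Ze E e * (SPF.prod r).Ze E e := by
  rw [Ze, Ze]; simp

theorem sum_eval_updateFinset_sdiff_of_scope_subset (G : SPF R ι X) {S : Finset ι}
    (hGS : G.scope ⊆ S) (x : ∀ i, X i) :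
    ∑ z : (∀ i : ↥(S \ E), X i), G.eval (updateFinset x (S \ E) z) =
      (∏ i ∈ (S \ G.scope) \ E, Fintype.card (X i)) •
        ∑ z : (∀ i : ↥(G.scope \ E), X i), G.eval (updateFinset x (G.scope \ E) z) := by
  have hsplit : S \ E = G.scope \ E ∪ (S \ G.scope) \ E := by
    rw [← union_sdiff_distrib, union_sdiff_of_subset hGS]
  rw [hsplit, sum_updateFinset_union_of_dependsOn (disjoint_sdiff.mono sdiff_subset sdiff_subset)
    x (dependsOn_eval G) (disjoint_sdiff.mono_right sdiff_subset)]

theorem Ze_eq_sum_eval_updateFinset (x : ∀ i, X i) (hx : ∀ i (hi : i ∈ E), x i = e ⟨i, hi⟩) :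
    ∀ G : SPF R ι X, G.Decomposable →
      G.Ze E e = ∑ z : (∀ i : ↥(G.scope \ E), X i), G.eval (updateFinset x (G.scope \ E) z)
  | .const c, _ => by
      rw [scope_const, empty_sdiff]
      simp [Ze, eval]
  | .leaf i φ, _ => by
      by_cases hi : i ∈ E
      · have hfree : ({i} : Finset ι) \ E = ∅ := by simpa
        rw [scope_leaf, hfree]
        simp [Ze, eval, hi, hx]
      · have hfree : ({i} : Finset ι) \ E = {i} := by simpa
        rw [scope_leaf, hfree]
        simp only [Ze, eval, dif_neg hi, updateFinset_singleton, update_self]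
        exact Fintype.sum_equiv (Equiv.piUnique fun j : ↥({i} : Finset ι) => X j).symm _ _
          fun _ => rfl
  | .sum l, hdec => by
      have hchildren : ∀ G ∈ l, G.Decomposable := by cases hdec with | sum h => exact h
      simp only [Ze_sum, eval_sum]
      rw [← List.sum_map_sum]
      refine congrArg List.sum (List.map_congr_left fun G hG => ?_)
      rw [Ze_eq_sum_eval_updateFinset x hx G (hchildren G hG),
        sum_eval_updateFinset_sdiff_of_scope_subset E G
          (fun j hj => mem_scope_sum.mpr ⟨G, hG, hj⟩) x]
  | .prod [], _ => by
      rw [scope_prod_nil, empty_sdiff]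
      simp [Ze]
  | .prod (G :: r), hdec => by
      obtain ⟨hG, hr, hdisj⟩ := hdec.of_prod_cons
      rw [Ze_prod_cons, Ze_eq_sum_eval_updateFinset x hx G hG,
        Ze_eq_sum_eval_updateFinset x hx (SPF.prod r) hr, scope_prod_cons, union_sdiff_distrib]
      simp only [eval_prod_cons]
      exact (sum_mul_updateFinset_union (hdisj.mono sdiff_subset sdiff_subset) x
        (dependsOn_eval G) (dependsOn_eval _) (hdisj.mono_right sdiff_subset)
        (hdisj.symm.mono_right sdiff_subset)).symm
termination_by G => sizeOf G
decreasing_by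
  all_goals first
    | (have := List.sizeOf_lt_of_mem hG; simp; omega)
    | (simp <;> omega)

end SPF

theorem combineEvidence_eq_updateFinset {ι : Type} [Fintype ι] [DecidableEq ι] {X : ι → Type}
    {E : Finset ι} {e : (i : ↥E) → X i.1} {x : ∀ i, X i} (hx : ∀ i (hi : i ∈ E), x i = e ⟨i, hi⟩)
    (z : (i : ↥(Eᶜ)) → X i.1) :
    combineEvidence E e z = updateFinset x Eᶜ z := by
  funext i
  by_cases hi : i ∈ E <;> simp [combineEvidence, updateFinset, hi, hx]

/-- Corollary 5: the (unnormalized) probability of evidence in a decomposable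
sum-product network (an SPF over the semiring `(ℝ≥0, +, ×, 0, 1)`) with full
scope is computed by the linear-time bottom-up pass `Z_e`. -/
theorem probability_of_evidence_decomposable_spn
    {ι : Type} [Fintype ι] [DecidableEq ι] {X : ι → Type}
    [∀ i, Fintype (X i)] [∀ i, Nonempty (X i)]
    (S : SPF NNReal ι X) (hdec : S.Decomposable) (hscope : S.scope = Finset.univ)
    (E : Finset ι) (e : (i : ↥E) → X i.1) :
    ∑ z : (i : ↥(Eᶜ)) → X i.1, S.eval (combineEvidence E e z) = S.Ze E e := by
  let x := combineEvidence E e fun _ => Classical.arbitrary _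
  have hx : ∀ i (hi : i ∈ E), x i = e ⟨i, hi⟩ := fun i hi => by simp [x, combineEvidence, hi]
  have key := S.Ze_eq_sum_eval_updateFinset E e x hx hdec
  rw [hscope, ← compl_eq_univ_sdiff] at key
  simp only [key, combineEvidence_eq_updateFinset hx]
end

section
/- Let F be a decomposable and deterministic NNF over n Boolean variables. Define c(F) ∈ ℕ recursively: c of a literal leaf is 1; c of an And node is the product of the c-values of its children; c of an Or node v with children G₁, …, G_m is ∑_k 2^{|scope(v) \ scope(G_k)|} * c(G_k). Then the number of satisfying assignments of F satisfies |{x : Fin n → Bool | eval F x = true}| = 2^{n − |scope(F)|} * c(F). -/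
/-- A negation normal form circuit (NNF) over `n` Boolean variables. -/
inductive NNF (n : ℕ) where
  | lit : Fin n → Bool → NNF n
  | and : List (NNF n) → NNF n
  | or : List (NNF n) → NNF n

namespace NNF

variable {n : ℕ}

/-- Evaluation of an NNF at an assignment. -/
def eval : NNF n → (Fin n → Bool) → Bool
  | .lit i b, x => x i == b
  | .and l, x => l.attach.all fun c => c.1.eval x
  | .or l, x => l.attach.any fun c => c.1.eval x
decreasing_by all_goals (simp_wf; have := List.sizeOf_lt_of_mem c.2; omega)

/-- The scope of an NNF: the set of variable indices appearing in its literals. -/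
def scope : NNF n → Finset (Fin n)
  | .lit i _ => {i}
  | .and l => (l.attach.map fun c => c.1.scope).foldr (· ∪ ·) ∅
  | .or l => (l.attach.map fun c => c.1.scope).foldr (· ∪ ·) ∅
decreasing_by all_goals (simp_wf; have := List.sizeOf_lt_of_mem c.2; omega)

/-- An NNF is decomposable iff the children of every And node have pairwise
disjoint scopes. -/
inductive Decomposable : NNF n → Prop
  | lit (i : Fin n) (b : Bool) : Decomposable (.lit i b)
  | and {l : List (NNF n)} :
      (∀ G ∈ l, Decomposable G) →
      l.Pairwise (fun G H => Disjoint G.scope H.scope) →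
      Decomposable (.and l)
  | or {l : List (NNF n)} :
      (∀ G ∈ l, Decomposable G) → Decomposable (.or l)

/-- An NNF is deterministic iff the supports of the children of every Or node
are pairwise disjoint. -/
inductive Deterministic : NNF n → Prop
  | lit (i : Fin n) (b : Bool) : Deterministic (.lit i b)
  | and {l : List (NNF n)} :
      (∀ G ∈ l, Deterministic G) → Deterministic (.and l)
  | or {l : List (NNF n)} :
      (∀ G ∈ l, Deterministic G) →
      l.Pairwise (fun G H =>
        Disjoint {x : Fin n → Bool | G.eval x = true}
                 {x : Fin n → Bool | H.eval x = true}) →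
      Deterministic (.or l)

/-- The bottom-up model-counting pass `c` (summation in the counting semiring
`(ℕ, +, ×, 0, 1)`): `c` of a literal leaf is `1`, of an And node the product of
its children's values, and of an Or node the sum of its children's values, each
multiplied by `2` raised to the number of variables in the node's scope missing
from that child's scope. -/
def countZ : NNF n → ℕ
  | .lit _ _ => 1
  | .and l => (l.attach.map fun c => c.1.countZ).prod
  | .or l => (l.attach.map fun c =>
      2 ^ ((NNF.or l).scope \ c.1.scope).card * c.1.countZ).sum
decreasing_by all_goals (simp_wf; have := List.sizeOf_lt_of_mem c.2; omega)

end NNF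

/-! The counting identity is proved in the subtraction-free form
`modelCount F * 2 ^ #F.scope = 2 ^ n * countZ F`, by structural induction. At an And node the
children have disjoint scopes, so their supports are independent events and
`modelCount (G ∧ H) * 2 ^ n = modelCount G * modelCount H`. At an Or node determinism makes the
supports of the children disjoint, so model counts add, and the factor
`2 ^ #(scope v \ scope G)` turns each child's `2 ^ #(scope G)` into the node's `2 ^ #(scope v)`. -/

open Finset Function

theorem Finset.card_filter_list_any {α β : Type*} (s : Finset α) (f : β → α → Bool)
    (l : List β) (hl : l.Pairwise fun a b => Disjoint {x | f a x = true} {x | f b x = true}) :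
    #{x ∈ s | l.any (f · x) = true} = (l.map fun b => #{x ∈ s | f b x = true}).sum := by
  classical
  induction l with
  | nil => simp
  | cons b l ih =>
    obtain ⟨hb, hl⟩ := List.pairwise_cons.1 hl
    have hdisj : Disjoint {x ∈ s | f b x = true} {x ∈ s | l.any (f · x) = true} := by
      simp only [Finset.disjoint_left, Finset.mem_filter, List.any_eq_true]
      rintro x ⟨-, hbx⟩ ⟨-, c, hc, hcx⟩
      exact Set.disjoint_left.1 (hb c hc) hbx hcx
    rw [List.map_cons, List.sum_cons, ← ih hl, ← card_union_of_disjoint hdisj, ← filter_or]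
    simp [List.any_cons]

theorem Finset.mem_foldr_union {α : Type*} [DecidableEq α] (L : List (Finset α)) (x : α) :
    x ∈ L.foldr (· ∪ ·) ∅ ↔ ∃ s ∈ L, x ∈ s := by
  induction L <;> simp [*]

theorem card_filter_and_mul_card_univ_of_dependsOn {ι α : Type*} [Fintype ι] [DecidableEq ι]
    [Fintype α] {f g : (ι → α) → Bool} {s t : Set ι} (hf : DependsOn f s) (hg : DependsOn g t)
    (hst : Disjoint s t) :
    #{x | f x = true ∧ g x = true} * Fintype.card (ι → α) =
      #{x | f x = true} * #{x | g x = true} := by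
  classical
  -- `(y, z) ↦ (y on s and z elsewhere, z on s and y elsewhere)` is an involution that trades
  -- `f y ∧ g z` for `f ∧ g` at the first component
  let swap : (ι → α) × (ι → α) → (ι → α) × (ι → α) :=
    fun p => (s.piecewise p.1 p.2, s.piecewise p.2 p.1)
  have hswap : Involutive swap := fun p => by
    ext i <;> by_cases hi : i ∈ s <;> simp [swap, hi]
  have hf_swap (y z : ι → α) : f (s.piecewise y z) = f y :=
    hf fun i hi => by simp [hi]
  have hg_swap (y z : ι → α) : g (s.piecewise y z) = g z :=
    hg fun i hi => by simp [Set.disjoint_right.1 hst hi]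
  rw [← card_univ, ← card_product, ← card_product]
  refine card_nbij' swap swap ?_ ?_ (fun p _ => hswap p) (fun p _ => hswap p)
  · rintro ⟨y, z⟩
    simp_all [swap]
  · rintro ⟨y, z⟩
    simp_all [swap]

namespace NNF

variable {n : ℕ}

@[induction_eliminator]
theorem induction {motive : NNF n → Prop} (lit : ∀ i b, motive (.lit i b))
    (and : ∀ l, (∀ G ∈ l, motive G) → motive (.and l))
    (or : ∀ l, (∀ G ∈ l, motive G) → motive (.or l)) :
    ∀ F, motive F
  | .lit i b => lit i b
  | .and l => and l fun G _ => induction lit and or G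
  | .or l => or l fun G _ => induction lit and or G
decreasing_by all_goals (simp_wf; have := List.sizeOf_lt_of_mem ‹G ∈ l›; omega)

@[simp]
theorem eval_lit (i : Fin n) (b : Bool) (x : Fin n → Bool) : (lit i b).eval x = (x i == b) := by
  rw [eval]

@[simp]
theorem eval_and (l : List (NNF n)) (x : Fin n → Bool) :
    (and l).eval x = l.all (·.eval x) := by
  rw [eval, Bool.eq_iff_iff]
  simp

@[simp]
theorem eval_or (l : List (NNF n)) (x : Fin n → Bool) :
    (or l).eval x = l.any (·.eval x) := by
  rw [eval, Bool.eq_iff_iff]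
  simp

@[simp]
theorem scope_lit (i : Fin n) (b : Bool) : (lit i b).scope = {i} := by
  rw [scope]

theorem scope_and (l : List (NNF n)) : (and l).scope = (l.map scope).foldr (· ∪ ·) ∅ := by
  rw [scope, List.map_attach_eq_pmap, List.pmap_eq_map]

theorem scope_or (l : List (NNF n)) : (or l).scope = (l.map scope).foldr (· ∪ ·) ∅ := by
  rw [scope, List.map_attach_eq_pmap, List.pmap_eq_map]

theorem scope_and_cons (G : NNF n) (l : List (NNF n)) :
    (and (G :: l)).scope = G.scope ∪ (and l).scope := by
  simp only [scope_and, List.map_cons, List.foldr_cons]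

theorem mem_scope_and {l : List (NNF n)} {i : Fin n} :
    i ∈ (and l).scope ↔ ∃ G ∈ l, i ∈ G.scope := by
  simp [scope_and, Finset.mem_foldr_union]

theorem mem_scope_or {l : List (NNF n)} {i : Fin n} :
    i ∈ (or l).scope ↔ ∃ G ∈ l, i ∈ G.scope := by
  simp [scope_or, Finset.mem_foldr_union]

theorem dependsOn_eval (F : NNF n) : DependsOn F.eval F.scope := by
  induction F with
  | lit i b => intro x y h; simp [h i (by simp)]
  | and l ih =>
    intro x y h
    rw [eval_and, eval_and, Bool.eq_iff_iff, List.all_eq_true, List.all_eq_true]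
    refine forall₂_congr fun G hG => ?_
    rw [ih G hG fun i hi => h i (mem_scope_and.2 ⟨G, hG, hi⟩)]
  | or l ih =>
    intro x y h
    rw [eval_or, eval_or, Bool.eq_iff_iff, List.any_eq_true, List.any_eq_true]
    refine exists_congr fun G => and_congr_right fun hG => ?_
    rw [ih G hG fun i hi => h i (mem_scope_or.2 ⟨G, hG, hi⟩)]

theorem countZ_and (l : List (NNF n)) : (and l).countZ = (l.map countZ).prod := by
  rw [countZ, List.map_attach_eq_pmap, List.pmap_eq_map]

theorem countZ_or (l : List (NNF n)) :
    (or l).countZ = (l.map fun G => 2 ^ #((or l).scope \ G.scope) * G.countZ).sum := by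
  rw [countZ, List.map_attach_eq_pmap]
  simp

def modelCount (F : NNF n) : ℕ := #{x | F.eval x = true}

theorem modelCount_lit_mul_two (i : Fin n) (b : Bool) : (lit i b).modelCount * 2 = 2 ^ n := by
  have h := Fintype.card_filter_piFinset_const_eq_of_mem (univ : Finset Bool) i (mem_univ b)
  simp only [Fintype.piFinset_univ, card_univ, Fintype.card_bool, Fintype.card_fin] at h
  simp only [modelCount, eval_lit, beq_iff_eq, h]
  exact pow_sub_one_mul i.pos.ne' 2

theorem modelCount_and_cons_mul_two_pow (G : NNF n) (l : List (NNF n))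
    (h : Disjoint G.scope (and l).scope) :
    (and (G :: l)).modelCount * 2 ^ n = G.modelCount * (and l).modelCount := by
  have := card_filter_and_mul_card_univ_of_dependsOn G.dependsOn_eval
    (and l).dependsOn_eval (disjoint_coe.2 h)
  simpa [modelCount, List.all_cons] using this

theorem modelCount_or (l : List (NNF n))
    (hl : l.Pairwise fun G H => Disjoint {x | G.eval x = true} {x | H.eval x = true}) :
    (or l).modelCount = (l.map modelCount).sum := by
  simp only [modelCount, eval_or]
  exact card_filter_list_any univ eval l hl

theorem modelCount_and_mul_two_pow_card_scope {l : List (NNF n)}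
    (hl : ∀ G ∈ l, G.modelCount * 2 ^ #G.scope = 2 ^ n * G.countZ)
    (hpw : l.Pairwise fun G H => Disjoint G.scope H.scope) :
    (and l).modelCount * 2 ^ #(and l).scope = 2 ^ n * (and l).countZ := by
  induction l with
  | nil => simp [modelCount, scope_and, countZ_and]
  | cons G l ih =>
    obtain ⟨hG, hpw⟩ := List.pairwise_cons.1 hpw
    have hdisj : Disjoint G.scope (and l).scope := disjoint_right.2 fun i hi => by
      obtain ⟨H, hH, hiH⟩ := mem_scope_and.1 hi
      exact disjoint_right.1 (hG H hH) hiH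
    apply Nat.eq_of_mul_eq_mul_right (pow_pos two_pos n)
    calc (and (G :: l)).modelCount * 2 ^ #(and (G :: l)).scope * 2 ^ n
        = (G.modelCount * 2 ^ #G.scope) * ((and l).modelCount * 2 ^ #(and l).scope) := by
          rw [scope_and_cons, card_union_of_disjoint hdisj, pow_add, mul_right_comm,
            modelCount_and_cons_mul_two_pow G l hdisj]
          ring
      _ = 2 ^ n * (and (G :: l)).countZ * 2 ^ n := by
          rw [hl G (.head l), ih (fun H hH => hl H (.tail G hH)) hpw, countZ_and, countZ_and,
            List.map_cons, List.prod_cons]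
          ring

theorem modelCount_mul_two_pow_card_scope {F : NNF n} (hdec : F.Decomposable)
    (hdet : F.Deterministic) : F.modelCount * 2 ^ #F.scope = 2 ^ n * F.countZ := by
  induction F with
  | lit i b => simp [modelCount_lit_mul_two, countZ]
  | and l ih =>
    cases hdec with | and hdec hpw =>
    cases hdet with | and hdet =>
    exact modelCount_and_mul_two_pow_card_scope (fun G hG => ih G hG (hdec G hG) (hdet G hG)) hpw
  | or l ih =>
    cases hdec with | or hdec =>
    cases hdet with | or hdet hpw =>
    rw [modelCount_or l hpw, countZ_or, ← List.sum_map_mul_right, ← List.sum_map_mul_left]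
    refine congrArg List.sum (List.map_congr_left fun G hG => ?_)
    have hsub : G.scope ⊆ (or l).scope := fun i hi => mem_scope_or.2 ⟨G, hG, hi⟩
    calc G.modelCount * 2 ^ #(or l).scope
        = 2 ^ #((or l).scope \ G.scope) * (G.modelCount * 2 ^ #G.scope) := by
          rw [← card_sdiff_add_card_eq_card hsub, pow_add]
          ring
      _ = 2 ^ n * (2 ^ #((or l).scope \ G.scope) * G.countZ) := by
          rw [ih G hG (hdec G hG) (hdet G hG)]
          ring

end NNF

/-- Corollary 8: the model count of a deterministic, decomposable NNF is
computed by the linear-time bottom-up pass `c`, corrected by a factor of `2`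
raised to the number of variables missing from the root's scope. -/
theorem model_count_deterministic_decomposable_nnf
    {n : ℕ} (F : NNF n) (hdec : F.Decomposable) (hdet : F.Deterministic) :
    (Finset.univ.filter fun x : Fin n → Bool => F.eval x = true).card =
      2 ^ (n - F.scope.card) * F.countZ := by
  have hle : #F.scope ≤ n := (card_le_univ _).trans_eq (Fintype.card_fin n)
  apply Nat.eq_of_mul_eq_mul_right (pow_pos two_pos #F.scope)
  calc F.modelCount * 2 ^ #F.scope
      = 2 ^ n * F.countZ := F.modelCount_mul_two_pow_card_scope hdec hdet
    _ = 2 ^ (n - #F.scope) * F.countZ * 2 ^ #F.scope := by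
      rw [mul_right_comm, ← pow_add, Nat.sub_add_cancel hle]
end
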